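/- Let a_1, a_2, a_3, a_4, b_2, b_3, b_4 be real numbers and set b_1 = 0. Define the generalized Routh–Hurwitz table quantities b_1⁽¹⁾ = a_1 b_1 − b_2, b_3⁽¹⁾ = a_1 b_3 − b_4, a_4⁽¹⁾ = a_1 a_4, a_2⁽²⁾ = a_1(a_1 a_2 − a_3) + b_1⁽¹⁾ b_2, b_3⁽²⁾ = a_1 b_3⁽¹⁾ − b_1⁽¹⁾ a_3, a_4⁽²⁾ = a_1 a_4⁽¹⁾ + b_1⁽¹⁾ b_4, b_2⁽²⁾ = a_2⁽²⁾ b_2 − a_1 b_3⁽²⁾, a_3⁽²⁾ = a_2⁽²⁾ a_3 − a_1 a_4⁽²⁾, b_4⁽²⁾ = a_2⁽²⁾ b_4, a_3⁽³⁾ = a_2⁽²⁾ a_3⁽²⁾ + b_2⁽²⁾ b_3⁽²⁾, b_4⁽³⁾ = a_2⁽²⁾ b_4⁽²⁾ − b_2⁽²⁾ a_4⁽²⁾, b_3⁽³⁾ = a_3⁽³⁾ b_3⁽²⁾ − a_2⁽²⁾ b_4⁽³⁾, a_4⁽³⁾ = a_3⁽³⁾ a_4⁽²⁾, a_4⁽⁴⁾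 = a_3⁽³⁾ a_4⁽³⁾ + b_3⁽³⁾ b_4⁽³⁾. Then a_4⁽⁴⁾ = γ²(a_1² a_4 − b_2 b_4) + (γβ − αδ)δ, where α := a_2⁽²⁾, β := a_1(a_1 b_3 − b_4) + a_3 b_2, γ := a_3⁽³⁾, and δ := α² b_4 − (α b_2 − a_1 β)(a_1² a_4 − b_2 b_4). -/
import Mathlib


theorem a4'4_closed_form
    (a1 a2 a3 a4 b2 b3 b4 : ℝ) (b1 : ℝ) (hb1 : b1 = 0)
    (b1'1 b3'1 a4'1 : ℝ)
    (hb1'1 : b1'1 = a1 * b1 - b2)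
    (hb3'1 : b3'1 = a1 * b3 - b4)
    (ha4'1 : a4'1 = a1 * a4)
    (a2'2 b3'2 a4'2 b2'2 a3'2 b4'2 : ℝ)
    (ha2'2 : a2'2 = a1 * (a1 * a2 - a3) + b1'1 * b2)
    (hb3'2 : b3'2 = a1 * b3'1 - b1'1 * a3)
    (ha4'2 : a4'2 = a1 * a4'1 + b1'1 * b4)
    (hb2'2 : b2'2 = a2'2 * b2 - a1 * b3'2)
    (ha3'2 : a3'2 = a2'2 * a3 - a1 * a4'2)
    (hb4'2 : b4'2 = a2'2 * b4)
    (a3'3 b4'3 b3'3 a4'3 : ℝ)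
    (ha3'3 : a3'3 = a2'2 * a3'2 + b2'2 * b3'2)
    (hb4'3 : b4'3 = a2'2 * b4'2 - b2'2 * a4'2)
    (hb3'3 : b3'3 = a3'3 * b3'2 - a2'2 * b4'3)
    (ha4'3 : a4'3 = a3'3 * a4'2)
    (a4'4 : ℝ)
    (ha4'4 : a4'4 = a3'3 * a4'3 + b3'3 * b4'3)
    (α β γ δ : ℝ)
    (hα : α = a2'2)
    (hβ : β = a1 * (a1 * b3 - b4) + a3 * b2)
    (hγ : γ = a3'3)
    (hδ : δ = α ^ 2 * b4 - (α * b2 - a1 * β) * (a1 ^ 2 * a4 - b2 * b4)) :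
    a4'4 = γ ^ 2 * (a1 ^ 2 * a4 - b2 * b4) + (γ * β - α * δ) * δ := by
  subst_vars; ring
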